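/- Let P be an antichain of consecutive patterns, and for k ≥ 2 let p_k denote the number of patterns of length k in P. Suppose α > 0 is such that the series Σ_{k≥2} p_k α^k / k! converges and 1 − α + Σ_{k≥2} p_k α^k / k! = 0. Then for every n ≥ 0, the number of permutations of length n avoiding all patterns in P satisfies a^P_n ≥ α^{−n} · n!. -/

import Mathlib

/-- Standardization of a list of (distinct) natural numbers: entry `x` is replaced
by the number of entries of the list that are smaller than `x`.  For a list with
distinct entries this is the unique order-isomorphic permutation of `{0,…,n-1}`. -/
def std (l : List ℕ) : List ℕ := l.map (fun x => (l.filter (· < x)).length)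

/-- `l` is (the list of values of) a permutation of `{0,…,n-1}` where `n = l.length`. -/
def IsPermList (l : List ℕ) : Prop := l.Perm (List.range l.length)

/-- The pattern `τ` occurs in `σ` as a consecutive pattern at (0-indexed) position `i`:
the factor of `σ` of length `τ.length` starting at position `i` is order-isomorphic to `τ`. -/
def OccursAt (τ σ : List ℕ) (i : ℕ) : Prop :=
  i + τ.length ≤ σ.length ∧ std ((σ.drop i).take τ.length) = τ

/-- `τ` occurs somewhere in `σ` as a consecutive pattern. -/
def Occurs (τ σ : List ℕ) : Prop := ∃ i, OccursAt τ σ i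

/-- `σ` avoids every pattern of the set `P`. -/
def AvoidsAll (P : Set (List ℕ)) (σ : List ℕ) : Prop := ∀ τ ∈ P, ¬ Occurs τ σ

/-- The number of permutations of length `n` avoiding all the patterns of `P`
as consecutive patterns. -/
noncomputable def avoidCount (P : Set (List ℕ)) (n : ℕ) : ℕ :=
  Nat.card {σ : List ℕ // σ.length = n ∧ IsPermList σ ∧ AvoidsAll P σ}

/-- `P` is an antichain of consecutive patterns: every element is a permutation of
length at least 2, and no pattern of `P` occurs in a different pattern of `P`. -/
def PatternAntichain (P : Set (List ℕ)) : Prop :=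
  (∀ τ ∈ P, IsPermList τ ∧ 2 ≤ τ.length) ∧
    ∀ τ₁ ∈ P, ∀ τ₂ ∈ P, τ₁ ≠ τ₂ → ¬ Occurs τ₁ τ₂

/-- `IsChainT P q σ t`: the permutation (list) `σ` is a `q`-chain with respect to the
set of forbidden patterns `P`, with tail the terminal segment of `σ` of length `t`.
The empty permutation is the unique 0-chain (its own tail), the one-element
permutation is the unique 1-chain (its own tail), and a `(q+1)`-chain is a
concatenation `σ' ++ τ` (with `τ` nonempty) such that the standardization of `σ'` is a
`q`-chain with tail `τ'` (its last `t'` entries), and the standardization of `τ' ++ τ`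
contains exactly one occurrence of a pattern from `P`, this occurrence being a
terminal segment; the tail of the `(q+1)`-chain is `τ`. -/
inductive IsChainT (P : Set (List ℕ)) : ℕ → List ℕ → ℕ → Prop
  | zero : IsChainT P 0 [] 0
  | one : IsChainT P 1 [0] 1
  | succ (q : ℕ) (σ' τ : List ℕ) (t' : ℕ)
      (hτ : τ ≠ [])
      (hperm : IsPermList (σ' ++ τ))
      (hchain : IsChainT P q (std σ') t')
      (huniq : ∃! x : ℕ × List ℕ,
        x.2 ∈ P ∧ OccursAt x.2 (std (σ'.drop (σ'.length - t') ++ τ)) x.1)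
      (hterm : ∀ i : ℕ, ∀ ρ ∈ P,
        OccursAt ρ (std (σ'.drop (σ'.length - t') ++ τ)) i → i + ρ.length = t' + τ.length) :
      IsChainT P (q + 1) (σ' ++ τ) τ.length

/-- `σ` is a `q`-chain with respect to `P` (for some tail). -/
def IsPatChain (P : Set (List ℕ)) (q : ℕ) (σ : List ℕ) : Prop := ∃ t, IsChainT P q σ t

/-- `chainCount P n q` is the number of `q`-chains of length `n` with respect to `P`. -/
noncomputable def chainCount (P : Set (List ℕ)) (n q : ℕ) : ℕ :=
  Nat.card {σ : List ℕ // σ.length = n ∧ IsPatChain P q σ}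

/-- The number of `q`-chains of length `n` whose first entry is `p`
(entries counted `1,…,n`, while lists are `0`-indexed permutations of `{0,…,n-1}`). -/
noncomputable def chainCountFst (P : Set (List ℕ)) (n q p : ℕ) : ℕ :=
  Nat.card {σ : List ℕ // σ.length = n ∧ IsPatChain P q σ ∧ σ.getD 0 0 + 1 = p}

/-- The number of `q`-chains of length `n` whose first entry is `p` and second entry is `r`
(entries counted `1,…,n`). -/
noncomputable def chainCountFstSnd (P : Set (List ℕ)) (n q p r : ℕ) : ℕ :=
  Nat.card {σ : List ℕ //
    σ.length = n ∧ IsPatChain P q σ ∧ σ.getD 0 0 + 1 = p ∧ σ.getD 1 0 + 1 = r}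

/-- A pattern `τ` has no self-overlaps if every permutation of length at most
`2 * τ.length - 2` contains at most one occurrence of `τ`. -/
def NonSelfOverlapping (τ : List ℕ) : Prop :=
  ∀ σ : List ℕ, IsPermList σ → σ.length ≤ 2 * τ.length - 2 →
    ∀ i j : ℕ, OccursAt τ σ i → OccursAt τ σ j → i = j

/-- The number of occurrences of `τ` in `σ` as a consecutive pattern. -/
noncomputable def occCount (τ σ : List ℕ) : ℕ := Nat.card {i : ℕ // OccursAt τ σ i}

/-- The `k`-fold ordered sum `λ (λ+m) (λ+2m) … (λ+(k-1)m)` of a pattern `λ` of length `m`. -/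
def ordSum (k m : ℕ) (l : List ℕ) : List ℕ :=
  ((List.range k).map (fun j => l.map (fun x => x + j * m))).flatten

/-- The length of the maximal initial segment of `l` that is an increasing run. -/
noncomputable def initRise (l : List ℕ) : ℕ :=
  sSup {j | j ≤ l.length ∧ List.Pairwise (· < ·) (l.take j)}

/-- The length of the maximal terminal segment of `l` that is an increasing run. -/
noncomputable def termRise (l : List ℕ) : ℕ :=
  sSup {j | j ≤ l.length ∧ List.Pairwise (· < ·) (l.drop (l.length - j))}

/-!
Append a new last value `v ∈ {0,…,n}` to a permutation `π` of length `n` avoiding `P`, shifting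
the entries `≥ v` up by one. The `(n+1) a_n` resulting permutations are distinct, and an
occurrence of a pattern of `P` in one of them must be a suffix. So each of them either avoids `P`
or is determined by the pattern `τ ∈ P` at its end, the set of values in its last `|τ|`
positions, and its standardized prefix, which again avoids `P`. Hence
`(n+1) a_n ≤ a_{n+1} + Σ_k p_k C(n+1,k) a_{n+1-k}`. In terms of `c_n = a_n α^n / n!` this reads
`α c_n ≤ c_{n+1} + Σ_k (p_k α^k / k!) c_{n+1-k}`, and since `Σ_k p_k α^k / k! = α - 1`, induction
shows that `c` is nondecreasing, so `c_n ≥ c_0 = 1`.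
-/

open Finset

section Standardization

lemma std_length (l : List ℕ) : (std l).length = l.length :=
  List.length_map _

lemma std_eq_map_countP (l : List ℕ) : std l = l.map fun x => l.countP (· < x) := by
  simp [std, List.countP_eq_length_filter]

lemma List.countP_lt_countP_lt {l : List ℕ} {x y : ℕ} (hx : x ∈ l) (hxy : x < y) :
    l.countP (· < x) < l.countP (· < y) := by
  induction l with
  | nil => cases hx
  | cons a t ih =>
    have hmono : t.countP (· < x) ≤ t.countP (· < y) :=
      List.countP_mono_left fun z _ hz => by simp only [decide_eq_true_eq] at hz ⊢; omega
    rcases List.mem_cons.mp hx with rfl | hxt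
    · simp [hxy]; omega
    · have := ih hxt
      by_cases hax : a < x
      · simp [hax, hax.trans hxy]; omega
      · by_cases hay : a < y <;> simp [hax, hay] <;> omega

lemma List.countP_lt_lt_countP_lt_iff {l : List ℕ} {x y : ℕ} (hx : x ∈ l) (hy : y ∈ l) :
    l.countP (· < x) < l.countP (· < y) ↔ x < y := by
  refine ⟨fun h => ?_, List.countP_lt_countP_lt hx⟩
  by_contra hxy
  rcases (not_lt.mp hxy).lt_or_eq with hyx | rfl
  · exact (List.countP_lt_countP_lt hy hyx).not_gt h
  · exact h.false

lemma std_map_of_lt_iff {l : List ℕ} {f : ℕ → ℕ}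
    (hf : ∀ x ∈ l, ∀ y ∈ l, f x < f y ↔ x < y) : std (l.map f) = std l := by
  simp only [std_eq_map_countP, List.map_map, List.countP_map]
  refine List.map_congr_left fun x hx => List.countP_congr fun y hy => ?_
  simpa using hf y hy x hx

lemma List.countP_range_lt (n x : ℕ) : (List.range n).countP (· < x) = min x n := by
  induction n with
  | zero => simp
  | succ n ih =>
    rw [List.range_succ, List.countP_append, ih]
    by_cases n < x <;> simp [*] <;> omega

lemma std_eq_self {l : List ℕ} (hl : IsPermList l) : std l = l := by
  rw [std_eq_map_countP]
  conv_rhs => rw [← List.map_id l]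
  refine List.map_congr_left fun x hx => ?_
  have hxl : x < l.length := List.mem_range.mp (hl.subset hx)
  rw [hl.countP_eq, List.countP_range_lt, id, min_eq_left hxl.le]

lemma isPermList_of_nodup {l : List ℕ} (hl : l.Nodup) (hlt : ∀ x ∈ l, x < l.length) :
    IsPermList l := by
  refine List.perm_of_nodup_nodup_toFinset_eq hl List.nodup_range ?_
  rw [List.toFinset_range]
  refine eq_of_subset_of_card_le (fun x hx => mem_range.mpr (hlt x (List.mem_toFinset.mp hx)))
    (by rw [card_range, List.toFinset_card_of_nodup hl])

lemma isPermList_std {l : List ℕ} (hl : l.Nodup) : IsPermList (std l) := by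
  refine isPermList_of_nodup ?_ ?_
  · rw [std_eq_map_countP]
    refine hl.map_on fun x hx y hy hxy => le_antisymm ?_ ?_ <;>
      refine not_lt.mp fun h => ?_
    · exact (List.countP_lt_countP_lt hy h).ne' hxy
    · exact (List.countP_lt_countP_lt hx h).ne hxy
  · simp only [std_eq_map_countP, List.mem_map, List.length_map]
    rintro _ ⟨x, hx, rfl⟩
    exact List.countP_lt_length_iff.mpr ⟨x, hx, by simp⟩

lemma List.getD_countP_lt_of_pairwise {w : List ℕ} (hw : w.Pairwise (· < ·)) {x : ℕ}
    (hx : x ∈ w) : w.getD (w.countP (· < x)) 0 = x := by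
  induction w with
  | nil => cases hx
  | cons a t ih =>
    rw [List.pairwise_cons] at hw
    rcases List.mem_cons.mp hx with rfl | hxt
    · have : t.countP (· < x) = 0 :=
        List.countP_eq_zero.mpr fun y hy => by simpa using (hw.1 y hy).le
      simp [this]
    · rw [List.countP_cons, if_pos (by simpa using hw.1 x hxt), List.getD_cons_succ]
      exact ih hw.2 hxt

/-- The list with set of values `s` whose standardization is `l` (when `#s = l.length`). -/
def relabel (s : Finset ℕ) (l : List ℕ) : List ℕ := l.map fun r => s.sort.getD r 0

lemma relabel_toFinset_std {l : List ℕ} (hl : l.Nodup) : relabel l.toFinset (std l) = l := by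
  have hperm : l.Perm l.toFinset.sort :=
    ((Finset.sort_perm_toList _ _).trans (List.toFinset_toList hl)).symm
  rw [relabel, std_eq_map_countP, List.map_map]
  conv_rhs => rw [← List.map_id l]
  refine List.map_congr_left fun x hx => ?_
  simp only [Function.comp, hperm.countP_eq, id]
  exact List.getD_countP_lt_of_pairwise (Finset.sortedLT_sort _).pairwise
    ((Finset.mem_sort _).mpr (List.mem_toFinset.mpr hx))

lemma relabel_append_relabel {σ : List ℕ} (hσ : IsPermList σ) (m : ℕ) :
    relabel (range σ.length \ (σ.drop m).toFinset) (std (σ.take m)) ++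
      relabel (σ.drop m).toFinset (std (σ.drop m)) = σ := by
  have hnd : (σ.take m ++ σ.drop m).Nodup := by
    rw [List.take_append_drop]
    exact hσ.nodup_iff.mpr List.nodup_range
  have hcompl : range σ.length \ (σ.drop m).toFinset = (σ.take m).toFinset := by
    ext a
    have hmem : a ∈ σ.take m ++ σ.drop m ↔ a < σ.length := by
      rw [List.take_append_drop, hσ.mem_iff, List.mem_range]
    rw [List.mem_append] at hmem
    have hdisj := List.disjoint_of_nodup_append hnd
    simp only [mem_sdiff, mem_range, List.mem_toFinset]
    exact ⟨fun h => (hmem.mpr h.1).resolve_right h.2, fun h => ⟨hmem.mp (.inl h), hdisj h⟩⟩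
  rw [hcompl, relabel_toFinset_std (List.nodup_append.mp hnd).1,
    relabel_toFinset_std (List.nodup_append.mp hnd).2.1, List.take_append_drop]

end Standardization

section Occurrences

lemma occursAt_map_iff {σ : List ℕ} {f : ℕ → ℕ} (hf : ∀ x ∈ σ, ∀ y ∈ σ, f x < f y ↔ x < y)
    {τ : List ℕ} {i : ℕ} : OccursAt τ (σ.map f) i ↔ OccursAt τ σ i := by
  have hsub : ∀ x ∈ (σ.drop i).take τ.length, x ∈ σ := fun x hx =>
    ((List.take_sublist _ _).trans (List.drop_sublist _ _)).subset hx
  rw [OccursAt, OccursAt, List.length_map, ← List.map_drop, ← List.map_take,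
    std_map_of_lt_iff fun x hx y hy => hf x (hsub x hx) y (hsub y hy)]

lemma occursAt_std_iff {σ τ : List ℕ} {i : ℕ} : OccursAt τ (std σ) i ↔ OccursAt τ σ i := by
  rw [std_eq_map_countP]
  exact occursAt_map_iff fun x hx y hy => List.countP_lt_lt_countP_lt_iff hx hy

lemma occursAt_take_iff {σ τ : List ℕ} {m i : ℕ} :
    OccursAt τ (σ.take m) i ↔ i + τ.length ≤ m ∧ OccursAt τ σ i := by
  simp only [OccursAt, List.length_take, le_min_iff]
  constructor
  · rintro ⟨⟨him, hiσ⟩, h⟩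
    refine ⟨him, hiσ, ?_⟩
    rwa [List.drop_take, List.take_take, min_eq_left (by omega)] at h
  · rintro ⟨him, hiσ, h⟩
    refine ⟨⟨him, hiσ⟩, ?_⟩
    rwa [List.drop_take, List.take_take, min_eq_left (by omega)]

lemma isPermList_of_occursAt {σ τ : List ℕ} (hσ : σ.Nodup) {i : ℕ} (h : OccursAt τ σ i) :
    IsPermList τ :=
  h.2 ▸ isPermList_std (((List.take_sublist _ _).trans (List.drop_sublist _ _)).nodup hσ)

end Occurrences

section AppendLast

def shiftFrom (v x : ℕ) : ℕ := if v ≤ x then x + 1 else x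

lemma shiftFrom_lt_shiftFrom_iff {v x y : ℕ} : shiftFrom v x < shiftFrom v y ↔ x < y := by
  unfold shiftFrom; split_ifs <;> omega

def appendLast (v : ℕ) (π : List ℕ) : List ℕ := π.map (shiftFrom v) ++ [v]

lemma length_appendLast (v : ℕ) (π : List ℕ) : (appendLast v π).length = π.length + 1 := by
  simp [appendLast]

lemma isPermList_appendLast {v : ℕ} {π : List ℕ} (hπ : IsPermList π) (hv : v ≤ π.length) :
    IsPermList (appendLast v π) := by
  refine isPermList_of_nodup ?_ fun x hx => ?_
  · refine List.nodup_append.mpr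
      ⟨(hπ.nodup_iff.mpr List.nodup_range).map_on fun x _ y _ h => ?_, List.nodup_singleton v, ?_⟩
    · exact le_antisymm (not_lt.mp fun hlt => (shiftFrom_lt_shiftFrom_iff.mpr hlt).ne' h)
        (not_lt.mp fun hlt => (shiftFrom_lt_shiftFrom_iff.mpr hlt).ne h)
    · simp only [List.mem_map, List.mem_singleton]
      rintro _ ⟨x, -, rfl⟩ _ rfl
      unfold shiftFrom; split_ifs <;> omega
  · rw [length_appendLast]
    simp only [appendLast, List.mem_append, List.mem_map, List.mem_singleton] at hx
    rcases hx with ⟨y, hy, rfl⟩ | rfl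
    · have := List.mem_range.mp (hπ.subset hy)
      unfold shiftFrom; split_ifs <;> omega
    · omega

lemma take_appendLast (v : ℕ) (π : List ℕ) :
    (appendLast v π).take π.length = π.map (shiftFrom v) :=
  List.take_left' (List.length_map _)

lemma std_take_appendLast {v : ℕ} {π : List ℕ} (hπ : IsPermList π) :
    std ((appendLast v π).take π.length) = π := by
  rw [take_appendLast, std_map_of_lt_iff fun _ _ _ _ => shiftFrom_lt_shiftFrom_iff,
    std_eq_self hπ]

lemma getLast?_appendLast (v : ℕ) (π : List ℕ) : (appendLast v π).getLast? = some v :=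
  List.getLast?_concat

lemma occursAt_appendLast_iff {v : ℕ} {π τ : List ℕ} {i : ℕ} (hi : i + τ.length ≤ π.length) :
    OccursAt τ (appendLast v π) i ↔ OccursAt τ π i := by
  rw [← (occursAt_take_iff (m := π.length)).trans (and_iff_right hi), take_appendLast,
    occursAt_map_iff fun _ _ _ _ => shiftFrom_lt_shiftFrom_iff]

end AppendLast

section Counting

open Classical

variable (P : Set (List ℕ))

def permsOf (n : ℕ) : Finset (List ℕ) := (List.range n).permutations.toFinset

noncomputable def avoiders (n : ℕ) : Finset (List ℕ) := (permsOf n).filter (AvoidsAll P)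

noncomputable def patternsOfLength (k : ℕ) : Finset (List ℕ) := (permsOf k).filter (· ∈ P)

/-- The permutations of length `N` whose last `k` entries form an occurrence of a pattern of `P`
of length `k` while the remaining prefix avoids `P`. -/
noncomputable def endingInPattern (N k : ℕ) : Finset (List ℕ) :=
  ((patternsOfLength P k ×ˢ powersetCard k (range N)) ×ˢ avoiders P (N - k)).image
    fun x => relabel (range N \ x.1.2) x.2 ++ relabel x.1.2 x.1.1

variable {P}

lemma mem_permsOf {n : ℕ} {σ : List ℕ} : σ ∈ permsOf n ↔ σ.length = n ∧ IsPermList σ := by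
  rw [permsOf, List.mem_toFinset, List.mem_permutations, IsPermList]
  exact ⟨fun h => ⟨by simpa using h.length_eq, by simpa [h.length_eq] using h⟩,
    fun ⟨hl, h⟩ => hl ▸ h⟩

lemma avoidCount_eq_card (n : ℕ) : avoidCount P n = #(avoiders P n) :=
  Nat.subtype_card _ fun σ => by simp [avoiders, mem_permsOf, and_assoc]

lemma avoidCount_zero (hP : ∀ τ ∈ P, τ ≠ []) : avoidCount P 0 = 1 := by
  rw [avoidCount_eq_card, card_eq_one]
  refine ⟨[], eq_singleton_iff_unique_mem.mpr ⟨?_, fun σ hσ => ?_⟩⟩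
  · refine mem_filter.mpr ⟨mem_permsOf.mpr ⟨rfl, List.Perm.refl _⟩, fun τ hτ ⟨i, hi, _⟩ => ?_⟩
    exact hP τ hτ (List.eq_nil_of_length_eq_zero (by simp only [List.length_nil] at hi; omega))
  · exact List.eq_nil_of_length_eq_zero (mem_permsOf.mp (mem_filter.mp hσ).1).1

lemma card_subtype_mem_length_eq (hP : ∀ τ ∈ P, IsPermList τ) (k : ℕ) :
    Nat.card {τ : List ℕ // τ ∈ P ∧ τ.length = k} = #(patternsOfLength P k) :=
  Nat.subtype_card _ fun τ => by
    simp only [patternsOfLength, mem_filter, mem_permsOf]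
    exact ⟨fun ⟨⟨hl, _⟩, hτ⟩ => ⟨hτ, hl⟩, fun ⟨hτ, hl⟩ => ⟨⟨hl, hP τ hτ⟩, hτ⟩⟩

lemma card_endingInPattern_le (N k : ℕ) :
    #(endingInPattern P N k) ≤ #(patternsOfLength P k) * N.choose k * #(avoiders P (N - k)) := by
  rw [endingInPattern]
  refine card_image_le.trans_eq ?_
  rw [card_product, card_product, card_powersetCard, card_range]

lemma mem_avoiders_or_mem_endingInPattern (hP : ∀ τ ∈ P, τ ≠ []) {N : ℕ} {σ : List ℕ}
    (hσ : σ ∈ permsOf N) (hsuffix : ∀ τ ∈ P, ∀ i, OccursAt τ σ i → i + τ.length = N) :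
    σ ∈ avoiders P N ∪ (range (N + 1)).biUnion (endingInPattern P N) := by
  obtain ⟨hσN, hσperm⟩ := mem_permsOf.mp hσ
  have hσnd : σ.Nodup := hσperm.nodup_iff.mpr List.nodup_range
  by_cases hav : AvoidsAll P σ
  · exact mem_union_left _ (mem_filter.mpr ⟨hσ, hav⟩)
  refine mem_union_right _ (mem_biUnion.mpr ?_)
  obtain ⟨τ, hτP, i, hocc⟩ : ∃ τ ∈ P, Occurs τ σ := by
    simpa [AvoidsAll] using hav
  have hi := hsuffix τ hτP i hocc
  set k := τ.length
  have hτ : std (σ.drop (N - k)) = τ := by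
    rw [← hocc.2, show i = N - k by omega, List.take_of_length_le (by simp; omega)]
  refine ⟨k, mem_range.mpr (by omega), mem_image.mpr ⟨((τ, (σ.drop (N - k)).toFinset),
    std (σ.take (N - k))), mem_product.mpr ⟨mem_product.mpr ⟨?_, ?_⟩, ?_⟩, ?_⟩⟩
  · exact mem_filter.mpr ⟨mem_permsOf.mpr ⟨rfl, isPermList_of_occursAt hσnd hocc⟩, hτP⟩
  · refine mem_powersetCard.mpr ⟨fun x hx => ?_, ?_⟩
    · exact mem_range.mpr (hσN ▸ List.mem_range.mp
        (hσperm.subset ((List.drop_sublist _ _).subset (List.mem_toFinset.mp hx))))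
    · rw [List.toFinset_card_of_nodup ((List.drop_sublist _ _).nodup hσnd), List.length_drop]
      omega
  · refine mem_filter.mpr ⟨mem_permsOf.mpr ⟨by rw [std_length, List.length_take]; omega,
      isPermList_std ((List.take_sublist _ _).nodup hσnd)⟩, fun ρ hρP ⟨j, hj⟩ => ?_⟩
    obtain ⟨hjk, hj⟩ := occursAt_take_iff.mp (occursAt_std_iff.mp hj)
    -- an occurrence inside the prefix is also a suffix of `σ`, which forces `τ = []`
    have := hsuffix ρ hρP j hj
    have := List.length_pos_of_ne_nil (hP ρ hρP)
    have := List.length_pos_of_ne_nil (hP τ hτP)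
    omega
  · simpa only [hτ, hσN] using relabel_append_relabel hσperm (N - k)

theorem succ_mul_card_avoiders_le (hP : ∀ τ ∈ P, τ ≠ []) (n : ℕ) :
    (n + 1) * #(avoiders P n) ≤ #(avoiders P (n + 1)) + ∑ k ∈ range (n + 2),
      #(patternsOfLength P k) * (n + 1).choose k * #(avoiders P (n + 1 - k)) := by
  have hinj : Set.InjOn (fun x : ℕ × List ℕ => appendLast x.1 x.2)
      ↑(range (n + 1) ×ˢ avoiders P n) := by
    rintro ⟨v, π⟩ hx ⟨v', π'⟩ hx' h
    simp only [coe_product, Set.mem_prod, mem_coe, avoiders, mem_filter, mem_permsOf] at hx hx' h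
    obtain ⟨-, ⟨hπn, hπ⟩, -⟩ := hx
    obtain ⟨-, ⟨hπn', hπ'⟩, -⟩ := hx'
    have hv : v = v' := by simpa [getLast?_appendLast] using congrArg List.getLast? h
    have hπeq : π = π' := by
      rw [← std_take_appendLast hπ, ← std_take_appendLast hπ', h, hπn, hπn']
    rw [hv, hπeq]
  have hsub : (range (n + 1) ×ˢ avoiders P n).image (fun x => appendLast x.1 x.2) ⊆
      avoiders P (n + 1) ∪ (range (n + 2)).biUnion (endingInPattern P (n + 1)) := by
    intro σ hσ
    obtain ⟨⟨v, π⟩, hx, rfl⟩ := mem_image.mp hσ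
    simp only [mem_product, mem_range, avoiders, mem_filter, mem_permsOf] at hx
    obtain ⟨hv, ⟨hπn, hπ⟩, hπP⟩ := hx
    have hmem : appendLast v π ∈ permsOf (n + 1) :=
      mem_permsOf.mpr ⟨by rw [length_appendLast, hπn], isPermList_appendLast hπ (by omega)⟩
    have hsuffix : ∀ τ ∈ P, ∀ i, OccursAt τ (appendLast v π) i → i + τ.length = n + 1 := by
      intro τ hτ i hocc
      have hle := hocc.1
      rw [length_appendLast, hπn] at hle
      by_contra hne
      exact hπP τ hτ ⟨i, (occursAt_appendLast_iff (by omega)).mp hocc⟩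
    exact mem_avoiders_or_mem_endingInPattern hP hmem hsuffix
  calc (n + 1) * #(avoiders P n)
      = #((range (n + 1) ×ˢ avoiders P n).image (fun x => appendLast x.1 x.2)) := by
        rw [card_image_of_injOn hinj, card_product, card_range]
    _ ≤ #(avoiders P (n + 1)) + #((range (n + 2)).biUnion (endingInPattern P (n + 1))) :=
        (card_le_card hsub).trans (card_union_le _ _)
    _ ≤ _ := by
        gcongr
        exact card_biUnion_le.trans (sum_le_sum fun k _ => card_endingInPattern_le _ _)

end Counting

open Nat

section Recurrence

lemma monotone_of_le_add_sum {c w : ℕ → ℝ} {α : ℝ} (hc0 : c 0 = 1) (hw : ∀ k, 0 ≤ w k)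
    (hw0 : w 0 = 0) (hwsum : ∀ N, ∑ k ∈ range N, w k ≤ α - 1)
    (hrec : ∀ m, α * c m ≤ c (m + 1) + ∑ k ∈ range (m + 2), w k * c (m + 1 - k)) :
    Monotone c := by
  suffices h : ∀ m, ∀ j ≤ m, c j ≤ c m from fun i j hij => h j i hij
  intro m
  induction m with
  | zero => intro j hj; rw [Nat.le_zero.mp hj]
  | succ m ih =>
    have hcm : 0 ≤ c m := zero_le_one.trans (hc0 ▸ ih 0 m.zero_le)
    have hsum : ∑ k ∈ range (m + 2), w k * c (m + 1 - k) ≤ (α - 1) * c m :=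
      calc ∑ k ∈ range (m + 2), w k * c (m + 1 - k)
          ≤ ∑ k ∈ range (m + 2), w k * c m := sum_le_sum fun k _ => by
            rcases k.eq_zero_or_pos with rfl | hk
            · simp [hw0]
            · exact mul_le_mul_of_nonneg_left (ih _ (by omega)) (hw k)
        _ ≤ (α - 1) * c m := by
            rw [← sum_mul]
            exact mul_le_mul_of_nonneg_right (hwsum _) hcm
    have hstep : c m ≤ c (m + 1) := by linarith [hrec m]
    intro j hj
    rcases (Nat.le_succ_iff.mp hj) with hj | rfl
    · exact (ih j hj).trans hstep
    · exact le_rfl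

lemma scaled_le_add_sum {a p : ℕ → ℕ} {α : ℝ} (hα : 0 < α) {n : ℕ}
    (h : (n + 1) * a n ≤
      a (n + 1) + ∑ k ∈ range (n + 2), p k * (n + 1).choose k * a (n + 1 - k)) :
    α * (a n * α ^ n / n !) ≤ a (n + 1) * α ^ (n + 1) / (n + 1)! + ∑ k ∈ range (n + 2),
      p k * α ^ k / k ! * (a (n + 1 - k) * α ^ (n + 1 - k) / (n + 1 - k)!) := by
  have hscale : (0 : ℝ) ≤ α ^ (n + 1) / (n + 1)! := by positivity
  have hterm : ∀ k ∈ range (n + 2), (p k * (n + 1).choose k * a (n + 1 - k) : ℝ) *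
      (α ^ (n + 1) / (n + 1)!) =
      p k * α ^ k / k ! * (a (n + 1 - k) * α ^ (n + 1 - k) / (n + 1 - k)!) := by
    intro k hk
    have hkn : k ≤ n + 1 := Nat.lt_succ_iff.mp (mem_range.mp hk)
    rw [Nat.cast_choose ℝ hkn, ← Nat.add_sub_cancel' hkn, pow_add, Nat.add_sub_cancel_left]
    field_simp
  have hR : ((n + 1) * a n : ℝ) ≤
      a (n + 1) + ∑ k ∈ range (n + 2), (p k * (n + 1).choose k * a (n + 1 - k) : ℝ) := by
    exact_mod_cast h
  have := mul_le_mul_of_nonneg_right hR hscale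
  rw [add_mul (a (n + 1) : ℝ), sum_mul, sum_congr rfl hterm] at this
  calc α * (a n * α ^ n / n !) = (n + 1) * a n * (α ^ (n + 1) / (n + 1)!) := by
        rw [Nat.factorial_succ, pow_succ]; push_cast; field_simp
    _ ≤ _ := this
    _ = _ := by rw [mul_div_assoc]

theorem factorial_div_pow_le_of_le_add_sum {a p : ℕ → ℕ} {α : ℝ} (hα : 0 < α) (ha0 : a 0 = 1)
    (hp0 : p 0 = 0) (hpsum : ∀ N, ∑ k ∈ range N, (p k : ℝ) * α ^ k / k ! ≤ α - 1)
    (hrec : ∀ n, (n + 1) * a n ≤ a (n + 1) +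
      ∑ k ∈ range (n + 2), p k * (n + 1).choose k * a (n + 1 - k)) (n : ℕ) :
    (n ! : ℝ) / α ^ n ≤ a n := by
  have hmono : Monotone fun m => (a m : ℝ) * α ^ m / m ! :=
    monotone_of_le_add_sum (by simp [ha0]) (fun k => by positivity) (by simp [hp0]) hpsum
      fun m => scaled_le_add_sum hα (hrec m)
  have h1 : 1 ≤ (a n : ℝ) * α ^ n / n ! := by simpa [ha0] using hmono n.zero_le
  rw [le_div_iff₀ (by positivity)] at h1
  rw [div_le_iff₀ (by positivity)]
  linarith

end Recurrence

/-- If `α > 0` is a root of `1 - t + Σ_{k≥2} p_k t^k / k!`, then the number of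
permutations of length `n` avoiding the antichain `P` satisfies `a^P_n ≥ α^{-n} n!`. -/
theorem statement1 (P : Set (List ℕ)) (hP : PatternAntichain P)
    (p : ℕ → ℕ) (hp : ∀ k : ℕ, p k = Nat.card {τ : List ℕ // τ ∈ P ∧ τ.length = k})
    (α : ℝ) (hα : 0 < α)
    (hsum : Summable fun k : ℕ => (p (k + 2) : ℝ) * α ^ (k + 2) / ((k + 2).factorial : ℝ))
    (hroot : 1 - α + ∑' k : ℕ, (p (k + 2) : ℝ) * α ^ (k + 2) / ((k + 2).factorial : ℝ) = 0) :
    ∀ n : ℕ, (n.factorial : ℝ) / α ^ n ≤ (avoidCount P n : ℝ) := by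
  have hpcard (k : ℕ) : p k = #(patternsOfLength P k) :=
    (hp k).trans (card_subtype_mem_length_eq (fun τ hτ => (hP.1 τ hτ).1) k)
  have hp_lt_two (k : ℕ) (hk : k < 2) : p k = 0 := by
    rw [hp, Nat.card_eq_zero]
    exact .inl ⟨fun τ => by have := (hP.1 τ.1 τ.2.1).2; omega⟩
  have hpsum (N : ℕ) : ∑ k ∈ range N, (p k : ℝ) * α ^ k / k ! ≤ α - 1 :=
    calc ∑ k ∈ range N, (p k : ℝ) * α ^ k / k !
        ≤ ∑ k ∈ range (N + 2), (p k : ℝ) * α ^ k / k ! :=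
          sum_le_sum_of_subset_of_nonneg (range_mono (by omega)) fun _ _ _ => by positivity
      _ = ∑ k ∈ range N, (p (k + 2) : ℝ) * α ^ (k + 2) / (k + 2)! := by
          simp [sum_range_succ', hp_lt_two]
      _ ≤ α - 1 := by linarith [hsum.sum_le_tsum (range N) fun _ _ => by positivity]
  have hne (τ : List ℕ) (hτ : τ ∈ P) : τ ≠ [] :=
    List.ne_nil_of_length_pos (by have := (hP.1 τ hτ).2; omega)
  refine factorial_div_pow_le_of_le_add_sum hα (avoidCount_zero hne) (hp_lt_two 0 two_pos)
    hpsum fun m => ?_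
  simpa only [avoidCount_eq_card, hpcard] using succ_mul_card_avoiders_le hne m
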